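/- The Beta rule of HOL is validated by reflexivity in the translation: for a HOL term M of type B with x a variable of type A, the Dedukti term Refl |B| |M| is well-typed in Σ, in the context declaring the translated free type variables and free term variables of (λx:A.M) x, with type ||(λx:A.M) x = M||, i.e., proof(eq |B| |(λx:A.M) x| |M|). -/

import Mathlib

set_option autoImplicit false

namespace HolDk

/-! ### Dedukti: the λΠ-calculus modulo rewriting, with de Bruijn indices.

Terms `M, N, A, B ::= x | c | Type | Kind | Πx:A.B | λx:A.M | M N`. -/

inductive DTm : Type
  | var   : ℕ → DTm
  | const : ℕ → DTm
  | type  : DTm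
  | kind  : DTm
  | pi    : DTm → DTm → DTm
  | lam   : DTm → DTm → DTm
  | app   : DTm → DTm → DTm
  deriving DecidableEq

namespace DTm

/-- Shift the free de Bruijn indices `≥ c` up by `d`. -/
def shift (d : ℕ) : ℕ → DTm → DTm
  | c, var n => if n < c then var n else var (n + d)
  | _, const k => const k
  | _, type => type
  | _, kind => kind
  | c, pi A B => pi (shift d c A) (shift d (c+1) B)
  | c, lam A M => lam (shift d c A) (shift d (c+1) M)
  | c, app M N => app (shift d c M) (shift d c N)

/-- Lift a simultaneous substitution under one binder. -/
def liftSub (σ : ℕ → DTm) : ℕ → DTm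
  | 0 => var 0
  | n+1 => shift 1 0 (σ n)

/-- Simultaneous substitution. -/
def subst (σ : ℕ → DTm) : DTm → DTm
  | var n => σ n
  | const k => const k
  | type => type
  | kind => kind
  | pi A B => pi (subst σ A) (subst (liftSub σ) B)
  | lam A M => lam (subst σ A) (subst (liftSub σ) M)
  | app M N => app (subst σ M) (subst σ N)

/-- Substitution `[N/x]M` of `N` for the de Bruijn index `0` in `M`. -/
def subst0 (M N : DTm) : DTm :=
  subst (fun n => match n with | 0 => N | n+1 => var n) M

/-- Non-dependent product `A → B`. -/
def arr (A B : DTm) : DTm := pi A (shift 1 0 B)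

end DTm

/-- Signatures `Σ ::= · | Σ, c : A | Σ, [Γ] M ⇝ N`. -/
inductive Sig : Type
  | empty : Sig
  | pushConst : Sig → ℕ → DTm → Sig
  | pushRule : Sig → List DTm → DTm → DTm → Sig

/-- Lookup of the type of a constant in a signature. -/
def Sig.constType : Sig → ℕ → Option DTm
  | .empty, _ => none
  | .pushConst S c A, d => if d = c then some A else S.constType d
  | .pushRule S _ _ _, d => S.constType d

/-- Membership of a rewrite rule `[Γ] M ⇝ N` in a signature. -/
def Sig.hasRule : Sig → List DTm → DTm → DTm → Prop
  | .empty, _, _, _ => False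
  | .pushConst S _ _, G, M, N => S.hasRule G M N
  | .pushRule S G' M' N', G, M, N => (G = G' ∧ M = M' ∧ N = N') ∨ S.hasRule G M N

/-- Pure β-reduction (one step, contextual closure). -/
inductive RedBeta : DTm → DTm → Prop
  | beta (A M N) : RedBeta (.app (.lam A M) N) (M.subst0 N)
  | appL {M M'} (N) : RedBeta M M' → RedBeta (.app M N) (.app M' N)
  | appR (M) {N N'} : RedBeta N N' → RedBeta (.app M N) (.app M N')
  | lamTy {A A'} (M) : RedBeta A A' → RedBeta (.lam A M) (.lam A' M)
  | lamBody (A) {M M'} : RedBeta M M' → RedBeta (.lam A M) (.lam A M')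
  | piL {A A'} (B) : RedBeta A A' → RedBeta (.pi A B) (.pi A' B)
  | piR (A) {B B'} : RedBeta B B' → RedBeta (.pi A B) (.pi A B')

/-- The reduction relation `→βΣ`: β-reduction together with the rewrite rules of
the signature (one step, contextual closure). -/
inductive Red (S : Sig) : DTm → DTm → Prop
  | beta (A M N) : Red S (.app (.lam A M) N) (M.subst0 N)
  | rew {G L R} (σ : ℕ → DTm) : S.hasRule G L R → Red S (L.subst σ) (R.subst σ)
  | appL {M M'} (N) : Red S M M' → Red S (.app M N) (.app M' N)
  | appR (M) {N N'} : Red S N N' → Red S (.app M N) (.app M N')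
  | lamTy {A A'} (M) : Red S A A' → Red S (.lam A M) (.lam A' M)
  | lamBody (A) {M M'} : Red S M M' → Red S (.lam A M) (.lam A M')
  | piL {A A'} (B) : Red S A A' → Red S (.pi A B) (.pi A' B)
  | piR (A) {B B'} : Red S B B' → Red S (.pi A B) (.pi A B')

/-- The conversion `≡βΣ`: reflexive symmetric transitive closure of `→βΣ`. -/
def Conv (S : Sig) : DTm → DTm → Prop := Relation.EqvGen (Red S)

mutual
/-- Signature formation `Σ signature`. -/
inductive SigWf : Sig → Prop
  | empty : SigWf .empty
  | pushConst {S : Sig} {c : ℕ} {A s : DTm} : SigWf S → Typed S [] A s →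
      (s = DTm.type ∨ s = DTm.kind) → S.constType c = none →
      SigWf (S.pushConst c A)
  | pushRule {S : Sig} {G : List DTm} {M N A : DTm} : SigWf S →
      Typed S G M A → Typed S G N A → SigWf (S.pushRule G M N)

/-- Context formation `Σ | Γ context` (contexts are lists, head = most recent binding). -/
inductive CtxWf : Sig → List DTm → Prop
  | nil {S : Sig} : SigWf S → CtxWf S []
  | cons {S : Sig} {G : List DTm} {A : DTm} : CtxWf S G → Typed S G A DTm.type →
      CtxWf S (A :: G)

/-- The typing judgment `Σ | Γ ⊢ M : A` of the λΠ-calculus modulo rewriting. -/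
inductive Typed : Sig → List DTm → DTm → DTm → Prop
  | var {S : Sig} {G : List DTm} {n : ℕ} {A : DTm} : CtxWf S G → G[n]? = some A →
      Typed S G (.var n) (A.shift (n+1) 0)
  | const {S : Sig} {G : List DTm} {c : ℕ} {A : DTm} : CtxWf S G →
      S.constType c = some A → Typed S G (.const c) A
  | type {S : Sig} {G : List DTm} : CtxWf S G → Typed S G .type .kind
  | prod {S : Sig} {G : List DTm} {A B s : DTm} : Typed S G A .type →
      Typed S (A :: G) B s → (s = DTm.type ∨ s = DTm.kind) → Typed S G (.pi A B) s
  | abs {S : Sig} {G : List DTm} {A M B : DTm} : Typed S G A .type →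
      Typed S (A :: G) M B → Typed S G (.lam A M) (.pi A B)
  | app {S : Sig} {G : List DTm} {M N A B : DTm} : Typed S G M (.pi A B) →
      Typed S G N A → Typed S G (.app M N) (B.subst0 N)
  | conv {S : Sig} {G : List DTm} {M A B : DTm} : Typed S G M A →
      Typed S G B DTm.type → Conv S A B → Typed S G M B
end

/-! ### HOL -/

/-- HOL types: type variables, `bool`, `ind`, and arrow types. -/
inductive HTy : Type
  | tvar : ℕ → HTy
  | bool : HTy
  | ind  : HTy
  | arr  : HTy → HTy → HTy
  deriving DecidableEq

/-- HOL terms (simply typed λ-terms, de Bruijn indices for term variables),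
with the polymorphic constants `(=_A)` and `select_A`. -/
inductive HTm : Type
  | var    : ℕ → HTm
  | lam    : HTy → HTm → HTm
  | app    : HTm → HTm → HTm
  | eq     : HTy → HTm
  | select : HTy → HTm
  deriving DecidableEq

/-- The HOL proposition `M = N` (at type `A`), i.e. `(=_A) M N`. -/
def HTm.heq (A : HTy) (M N : HTm) : HTm := .app (.app (.eq A) M) N

/-- HOL typing: `Δ ⊢ M : A` where `Δ` types the term variables. -/
inductive HTyped : List HTy → HTm → HTy → Prop
  | var {D : List HTy} {n : ℕ} {A : HTy} : D[n]? = some A → HTyped D (.var n) A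
  | lam {D : List HTy} {A B : HTy} {M : HTm} : HTyped (A :: D) M B →
      HTyped D (.lam A M) (A.arr B)
  | app {D : List HTy} {A B : HTy} {M N : HTm} : HTyped D M (A.arr B) →
      HTyped D N A → HTyped D (.app M N) B
  | eq {D : List HTy} {A : HTy} : HTyped D (.eq A) (A.arr (A.arr .bool))
  | select {D : List HTy} {A : HTy} : HTyped D (.select A) ((A.arr .bool).arr A)

namespace HTm

/-- Shift the free term-variable indices `≥ c` up by `d`. -/
def shift (d : ℕ) : ℕ → HTm → HTm
  | c, var n => if n < c then var n else var (n + d)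
  | c, lam A M => lam A (shift d (c+1) M)
  | c, app M N => app (shift d c M) (shift d c N)
  | _, eq A => eq A
  | _, select A => select A

def liftSub (σ : ℕ → HTm) : ℕ → HTm
  | 0 => var 0
  | n+1 => shift 1 0 (σ n)

/-- Simultaneous capture-avoiding substitution of term variables. -/
def substF (σ : ℕ → HTm) : HTm → HTm
  | var n => σ n
  | lam A M => lam A (substF (liftSub σ) M)
  | app M N => app (substF σ M) (substF σ N)
  | eq A => eq A
  | select A => select A

/-- Substitution `[N/x]M` for the de Bruijn index `0`. -/
def subst0 (M N : HTm) : HTm :=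
  substF (fun n => match n with | 0 => N | n+1 => var n) M

/-- Simultaneous (parallel) substitution `M[M₁/x₁, …, Mₙ/xₙ]` given by a list. -/
def substL (σ : List HTm) (M : HTm) : HTm :=
  substF (fun n => (σ[n]?).getD (var n)) M

end HTm

/-- Type substitution `A[A₁/α₁, …, Aₘ/αₘ]` on HOL types. -/
def HTy.tsub (θ : List HTy) : HTy → HTy
  | .tvar n => (θ[n]?).getD (.tvar n)
  | .bool => .bool
  | .ind => .ind
  | .arr A B => .arr (A.tsub θ) (B.tsub θ)

/-- Type substitution on HOL terms. -/
def HTm.tsub (θ : List HTy) : HTm → HTm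
  | .var n => .var n
  | .lam A M => .lam (A.tsub θ) (M.tsub θ)
  | .app M N => .app (M.tsub θ) (N.tsub θ)
  | .eq A => .eq (A.tsub θ)
  | .select A => .select (A.tsub θ)

/-- All free type variables of a HOL type are `< n`. -/
def HTy.tvLt (n : ℕ) : HTy → Prop
  | .tvar j => j < n
  | .bool => True
  | .ind => True
  | .arr A B => A.tvLt n ∧ B.tvLt n

/-- All free type variables of a HOL term are `< n`. -/
def HTm.tvLt (n : ℕ) : HTm → Prop
  | .var _ => True
  | .lam A M => A.tvLt n ∧ M.tvLt n
  | .app M N => M.tvLt n ∧ N.tvLt n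
  | .eq A => A.tvLt n
  | .select A => A.tvLt n

/-- One-step β-reduction of HOL terms (contextual closure). -/
inductive HBeta : HTm → HTm → Prop
  | beta (A : HTy) (M N : HTm) : HBeta (.app (.lam A M) N) (M.subst0 N)
  | appL {M M'} (N) : HBeta M M' → HBeta (.app M N) (.app M' N)
  | appR (M) {N N'} : HBeta N N' → HBeta (.app M N) (.app M N')
  | lamBody (A) {M M'} : HBeta M M' → HBeta (.lam A M) (.lam A M')

/-- HOL derivations `Γ ⊢ φ` (Fig. 2), in an ambient term-variable context `Δ`,
with hypotheses `Γ` a finite set of propositions.  The `Subst` rule is split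
into a type-substitution rule and a term-substitution rule. -/
inductive HDeriv : List HTy → Finset HTm → HTm → Type
  | refl {D : List HTy} (A : HTy) (M : HTm) :
      HTyped D M A → HDeriv D ∅ (HTm.heq A M M)
  | absThm {D : List HTy} {G : Finset HTm} (A B : HTy) (M N : HTm) :
      HDeriv (A :: D) (G.image (HTm.shift 1 0)) (HTm.heq B M N) →
      HDeriv D G (HTm.heq (A.arr B) (.lam A M) (.lam A N))
  | appThm {D : List HTy} {G G' : Finset HTm} (A B : HTy) (F Gt M N : HTm) :
      HDeriv D G (HTm.heq (A.arr B) F Gt) → HDeriv D G' (HTm.heq A M N) →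
      HDeriv D (G ∪ G') (HTm.heq B (F.app M) (Gt.app N))
  | beta {D : List HTy} (A B : HTy) (M : HTm) :
      HTyped (A :: D) M B →
      HDeriv (A :: D) ∅ (HTm.heq B (.app (.lam A (M.shift 1 1)) (.var 0)) M)
  | assume {D : List HTy} (φ : HTm) : HTyped D φ .bool → HDeriv D {φ} φ
  | eqMp {D : List HTy} {G G' : Finset HTm} (φ ψ : HTm) :
      HDeriv D G (HTm.heq .bool φ ψ) → HDeriv D G' φ →
      HDeriv D (G ∪ G') ψ
  | deductAntiSym {D : List HTy} {G G' : Finset HTm} (φ ψ : HTm) :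
      HDeriv D G φ → HDeriv D G' ψ →
      HDeriv D (G.erase ψ ∪ G'.erase φ) (HTm.heq .bool φ ψ)
  | typeSubst {D : List HTy} {G : Finset HTm} {φ : HTm} (θ : List HTy) :
      HDeriv D G φ →
      HDeriv (D.map (HTy.tsub θ)) (G.image (HTm.tsub θ)) (φ.tsub θ)
  | termSubst {D : List HTy} {G : Finset HTm} {φ : HTm} {D' : List HTy} (σ : List HTm) :
      σ.length = D.length →
      (∀ (i : ℕ) (A : HTy), D[i]? = some A → ∃ t, σ[i]? = some t ∧ HTyped D' t A) →
      HDeriv D G φ →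
      HDeriv D' (G.image (HTm.substL σ)) (HTm.substL σ φ)

/-! ### The Dedukti signature Σ for HOL -/

def cTy : DTm := .const 0
def dBool : DTm := .const 1
def dInd : DTm := .const 2
def tArr (a b : DTm) : DTm := .app (.app (.const 3) a) b
def tTerm (a : DTm) : DTm := .app (.const 4) a
def tEq (a x y : DTm) : DTm := .app (.app (.app (.const 5) a) x) y
def tProof (p : DTm) : DTm := .app (.const 7) p
def dRefl : DTm := .const 8
def dFunExt : DTm := .const 9
def dAppThm : DTm := .const 10
def dPropExt : DTm := .const 11
def dEqMp : DTm := .const 12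
def dImp : DTm := .const 13
def dForall : DTm := .const 14

def tyArrow : DTm := DTm.arr cTy (DTm.arr cTy cTy)
def tyTerm : DTm := DTm.arr cTy .type
def tyEq : DTm := .pi cTy (tTerm (tArr (.var 0) (tArr (.var 0) dBool)))
def tySelect : DTm := .pi cTy (tTerm (tArr (tArr (.var 0) dBool) (.var 0)))
def tyProof : DTm := DTm.arr (tTerm dBool) .type
def tyRefl : DTm :=
  .pi cTy (.pi (tTerm (.var 0)) (tProof (tEq (.var 1) (.var 0) (.var 0))))
def tyFunExt : DTm :=
  .pi cTy (.pi cTy (.pi (tTerm (tArr (.var 1) (.var 0))) (.pi (tTerm (tArr (.var 2) (.var 1)))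
    (DTm.arr
      (.pi (tTerm (.var 3))
        (tProof (tEq (.var 3) (.app (.var 2) (.var 0)) (.app (.var 1) (.var 0)))))
      (tProof (tEq (tArr (.var 3) (.var 2)) (.var 1) (.var 0)))))))
def tyAppThm : DTm :=
  .pi cTy (.pi cTy (.pi (tTerm (tArr (.var 1) (.var 0))) (.pi (tTerm (tArr (.var 2) (.var 1)))
    (.pi (tTerm (.var 3)) (.pi (tTerm (.var 4))
      (DTm.arr (tProof (tEq (tArr (.var 5) (.var 4)) (.var 3) (.var 2)))
        (DTm.arr (tProof (tEq (.var 5) (.var 1) (.var 0)))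
          (tProof (tEq (.var 4) (.app (.var 3) (.var 1)) (.app (.var 2) (.var 0)))))))))))
def tyPropExt : DTm :=
  .pi (tTerm dBool) (.pi (tTerm dBool)
    (DTm.arr (DTm.arr (tProof (.var 0)) (tProof (.var 1)))
      (DTm.arr (DTm.arr (tProof (.var 0)) (tProof (.var 1)))
        (tProof (tEq dBool (.var 1) (.var 0))))))
def tyEqMp : DTm :=
  .pi (tTerm dBool) (.pi (tTerm dBool)
    (DTm.arr (tProof (tEq dBool (.var 1) (.var 0)))
      (DTm.arr (tProof (.var 1)) (tProof (.var 0)))))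

/-- The rewrite rule `[α : type, β : type] term (arrow α β) ⇝ term α → term β`
(in the context list, the head is the most recent variable `β`). -/
def arrowRuleCtx : List DTm := [cTy, cTy]
def arrowRuleL : DTm := tTerm (tArr (.var 1) (.var 0))
def arrowRuleR : DTm := DTm.arr (tTerm (.var 1)) (tTerm (.var 0))

def baseSig : Sig :=
  ((((Sig.empty.pushConst 0 .type).pushConst 1 cTy).pushConst 2 cTy).pushConst 3
    tyArrow).pushConst 4 tyTerm

/-- The HOL signature Σ:
`type : Type`, `bool ind : type`, `arrow : type → type → type`, `term : type → Type`,
`eq`, `select`, the rewrite rule `term (arrow α β) ⇝ term α → term β`,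
`proof : term bool → Type`, and `Refl`, `FunExt`, `AppThm`, `PropExt`, `EqMp`. -/
def holSig : Sig :=
  ((((((((baseSig.pushConst 5 tyEq).pushConst 6 tySelect).pushRule arrowRuleCtx
    arrowRuleL arrowRuleR).pushConst 7 tyProof).pushConst 8 tyRefl).pushConst 9
    tyFunExt).pushConst 10 tyAppThm).pushConst 11 tyPropExt).pushConst 12 tyEqMp

/-! ### The translation -/

/-- Translation `|A|` of a HOL type as a Dedukti term; `ρ` gives the Dedukti
de Bruijn index of each HOL type variable. -/
def transTy (ρ : ℕ → ℕ) : HTy → DTm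
  | .tvar j => .var (ρ j)
  | .bool => dBool
  | .ind => dInd
  | .arr A B => tArr (transTy ρ A) (transTy ρ B)

/-- Lift a variable renaming under one binder. -/
def liftVar (ρ : ℕ → ℕ) : ℕ → ℕ
  | 0 => 0
  | n+1 => ρ n + 1

/-- Translation `|M|` of a HOL term as a Dedukti term; `ρT`, `ρt` give the
Dedukti de Bruijn indices of the free HOL type resp. term variables. -/
def transTm (ρT ρt : ℕ → ℕ) : HTm → DTm
  | .var i => .var (ρt i)
  | .lam A M => .lam (tTerm (transTy ρT A)) (transTm (fun j => ρT j + 1) (liftVar ρt) M)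
  | .app M N => .app (transTm ρT ρt M) (transTm ρT ρt N)
  | .eq A => .app (.const 5) (transTy ρT A)
  | .select A => .app (.const 6) (transTy ρT A)

/-- The Dedukti context `x₁ : ‖A₁‖, …, xₖ : ‖Aₖ‖` translating a HOL
term-variable context (to be placed in front of the `n` type variables). -/
def dTermCtx : List HTy → List DTm
  | [] => []
  | A :: D => tTerm (transTy (fun j => D.length + j) A) :: dTermCtx D

/-- The Dedukti context `‖Γ‖ = h₁ : ‖φ₁‖, …` translating HOL hypotheses;
`k` is the number of HOL term variables in scope. -/
def hypCtx (k : ℕ) : List HTm → List DTm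
  | [] => []
  | φ :: rest =>
      tProof (transTm (fun j => rest.length + k + j) (fun i => rest.length + i) φ) ::
        hypCtx k rest

def mkApps (f : DTm) (args : List DTm) : DTm := args.foldl .app f

def mkTyLams : ℕ → DTm → DTm
  | 0, M => M
  | n+1, M => .lam cTy (mkTyLams n M)

/-- `λx₁ : ‖B₁‖. … λxₖ : ‖Bₖ‖. M` (the head of the list is the innermost binder). -/
def bindTerms (ρT : ℕ → ℕ) : List HTy → DTm → DTm
  | [], M => M
  | A :: D, M => bindTerms ρT D (.lam (tTerm (transTy (fun j => ρT j + D.length) A)) M)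

/-- Translation `|𝒟|` of a HOL derivation as a Dedukti proof term; `ρT`, `ρt`
give the Dedukti indices of free HOL type/term variables, and `ρh` gives the
index of the hypothesis variable `h_φ` for each hypothesis `φ`. -/
def transDeriv : {D : List HTy} → {G : Finset HTm} → {φ : HTm} →
    (ρT ρt : ℕ → ℕ) → (ρh : HTm → ℕ) → HDeriv D G φ → DTm
  | _, _, _, ρT, ρt, _, .refl A M _ =>
      .app (.app dRefl (transTy ρT A)) (transTm ρT ρt M)
  | _, _, _, ρT, ρt, ρh, .absThm A B M N d =>
      .app (.app (.app (.app (.app dFunExt (transTy ρT A)) (transTy ρT B))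
          (transTm ρT ρt (.lam A M))) (transTm ρT ρt (.lam A N)))
        (.lam (tTerm (transTy ρT A))
          (transDeriv (fun j => ρT j + 1) (liftVar ρt)
            (fun χ => ρh (HTm.substF (fun i => .var (i - 1)) χ) + 1) d))
  | _, _, _, ρT, ρt, ρh, .appThm A B F Gt M N d1 d2 =>
      mkApps dAppThm [transTy ρT A, transTy ρT B, transTm ρT ρt F, transTm ρT ρt Gt,
        transTm ρT ρt M, transTm ρT ρt N,
        transDeriv ρT ρt ρh d1, transDeriv ρT ρt ρh d2]
  | _, _, _, ρT, ρt, _, .beta _ B M _ =>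
      .app (.app dRefl (transTy ρT B)) (transTm ρT ρt M)
  | _, _, _, _, _, ρh, .assume φ _ => .var (ρh φ)
  | _, _, _, ρT, ρt, ρh, .eqMp φ ψ d1 d2 =>
      mkApps dEqMp [transTm ρT ρt φ, transTm ρT ρt ψ,
        transDeriv ρT ρt ρh d1, transDeriv ρT ρt ρh d2]
  | _, _, _, ρT, ρt, ρh, .deductAntiSym φ ψ d1 d2 =>
      mkApps dPropExt [transTm ρT ρt φ, transTm ρT ρt ψ,
        .lam (tProof (transTm ρT ρt ψ))
          (transDeriv (fun j => ρT j + 1) (fun i => ρt i + 1)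
            (fun χ => if χ = ψ then 0 else ρh χ + 1) d1),
        .lam (tProof (transTm ρT ρt φ))
          (transDeriv (fun j => ρT j + 1) (fun i => ρt i + 1)
            (fun χ => if χ = φ then 0 else ρh χ + 1) d2)]
  | _, _, _, ρT, ρt, ρh, .typeSubst θ d =>
      mkApps
        (mkTyLams θ.length
          (transDeriv (fun j => if j < θ.length then j else ρT j + θ.length)
            (fun i => ρt i + θ.length)
            (fun χ => ρh (HTm.tsub θ χ) + θ.length) d))
        (θ.reverse.map (transTy ρT))
  | _, _, _, ρT, ρt, ρh, @HDeriv.termSubst D₀ _ _ _ σ _ _ d =>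
      mkApps
        (bindTerms ρT D₀
          (transDeriv (fun j => ρT j + D₀.length)
            (fun i => if i < D₀.length then i else ρt (i - D₀.length) + D₀.length)
            (fun χ => ρh (HTm.substL σ χ) + D₀.length) d))
        (σ.reverse.map (transTm ρT ρt))

/-- All free type variables appearing in a HOL derivation are `< n`. -/
def HDeriv.tvLt (n : ℕ) : {D : List HTy} → {G : Finset HTm} → {φ : HTm} →
    HDeriv D G φ → Prop
  | _, _, _, .refl A M _ => A.tvLt n ∧ M.tvLt n
  | _, _, _, .absThm A B M N d =>
      A.tvLt n ∧ B.tvLt n ∧ M.tvLt n ∧ N.tvLt n ∧ HDeriv.tvLt n d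
  | _, _, _, .appThm A B F Gt M N d1 d2 =>
      A.tvLt n ∧ B.tvLt n ∧ F.tvLt n ∧ Gt.tvLt n ∧ M.tvLt n ∧ N.tvLt n ∧
        HDeriv.tvLt n d1 ∧ HDeriv.tvLt n d2
  | _, _, _, .beta A B M _ => A.tvLt n ∧ B.tvLt n ∧ M.tvLt n
  | _, _, _, .assume φ _ => φ.tvLt n
  | _, _, _, .eqMp φ ψ d1 d2 => φ.tvLt n ∧ ψ.tvLt n ∧ HDeriv.tvLt n d1 ∧ HDeriv.tvLt n d2
  | _, _, _, .deductAntiSym φ ψ d1 d2 =>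
      φ.tvLt n ∧ ψ.tvLt n ∧ HDeriv.tvLt n d1 ∧ HDeriv.tvLt n d2
  | _, _, _, .typeSubst θ d => (∀ A ∈ θ, A.tvLt n) ∧ HDeriv.tvLt (max θ.length n) d
  | _, _, _, .termSubst σ _ _ d => (∀ t ∈ σ, t.tvLt n) ∧ HDeriv.tvLt n d

/-!
The translation of the `Beta` instance is `Refl |B| |M| : proof (eq |B| |M| |M|)`, and the
required type differs from this one by a single β-step `|(λx:A. M) x| ⟶ |M|`, so one use of the
conversion rule finishes the proof. The conversion rule asks for the target type to be
well-typed, which needs the translated redex to be well-typed (soundness of the translation of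
HOL terms) and, through well-formedness of contexts, well-formedness of the signature Σ itself.
-/
namespace DTm

theorem subst_var : ∀ X : DTm, X.subst var = X
  | var _ | const _ | type | kind => rfl
  | pi A B | lam A B => by
    have h : liftSub var = var := by funext n; cases n <;> rfl
    simp only [subst, h, subst_var A, subst_var B]
  | app M N => by simp only [subst, subst_var M, subst_var N]

theorem subst_shift_one (σ : ℕ → DTm) : ∀ (X : DTm) (c : ℕ),
    (X.shift 1 c).subst σ = X.subst (fun n => if n < c then σ n else σ (n + 1))
  | var n, c => by by_cases h : n < c <;> simp [shift, subst, h]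
  | const _, _ | type, _ | kind, _ => rfl
  | app M N, c => by simp only [shift, subst, subst_shift_one σ M, subst_shift_one σ N]
  | pi A B, c | lam A B, c => by
    have h : (fun n => if n < c + 1 then liftSub σ n else liftSub σ (n + 1))
        = liftSub (fun n => if n < c then σ n else σ (n + 1)) := by
      funext n
      cases n with
      | zero => rfl
      | succ n => simp only [liftSub, Nat.add_lt_add_iff_right]; split_ifs <;> rfl
    simp only [shift, subst, subst_shift_one, h]

theorem subst0_shift_one (X N : DTm) : (X.shift 1 0).subst0 N = X := by
  conv_rhs => rw [← subst_var X]
  exact subst_shift_one _ X 0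

end DTm

section Encoding

variable {S : Sig} {G : List DTm}

theorem CtxWf.of_cons {A : DTm} (h : CtxWf S (A :: G)) : CtxWf S G := by
  cases h with | cons hG _ => exact hG

theorem CtxWf.typed_pi {A B : DTm} (h : CtxWf S (A :: G)) (hB : Typed S (A :: G) B .type) :
    Typed S G (.pi A B) .type := by
  cases h with | cons _ hA => exact .prod hA hB (.inl rfl)

theorem typed_var {k : ℕ} {A T : DTm} (hG : CtxWf S G) (hA : G[k]? = some A)
    (hT : A.shift (k + 1) 0 = T) : Typed S G (.var k) T :=
  hT ▸ Typed.var hG hA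

theorem typed_tTerm {a : DTm} (h4 : S.constType 4 = some tyTerm) (hG : CtxWf S G)
    (ha : Typed S G a cTy) : Typed S G (tTerm a) .type :=
  Typed.app (B := DTm.shift 1 0 .type) (Typed.const hG h4) ha

theorem typed_tArr {a b : DTm} (h3 : S.constType 3 = some tyArrow) (hG : CtxWf S G)
    (ha : Typed S G a cTy) (hb : Typed S G b cTy) : Typed S G (tArr a b) cTy :=
  Typed.app (B := DTm.shift 1 0 cTy)
    (Typed.app (B := DTm.shift 1 0 (DTm.arr cTy cTy)) (Typed.const hG h3) ha) hb

theorem typed_tProof {p : DTm} (h7 : S.constType 7 = some tyProof) (hG : CtxWf S G)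
    (hp : Typed S G p (tTerm dBool)) : Typed S G (tProof p) .type :=
  Typed.app (B := DTm.shift 1 0 .type) (Typed.const hG h7) hp

theorem red_tTerm_tArr {a b : DTm} (hrule : S.hasRule arrowRuleCtx arrowRuleL arrowRuleR) :
    Red S (tTerm (tArr a b)) (DTm.arr (tTerm a) (tTerm b)) :=
  Red.rew (fun n => match n with | 0 => b | 1 => a | n + 2 => .var n) hrule

theorem typed_arr_tTerm {a b : DTm} (h4 : S.constType 4 = some tyTerm) (hG : CtxWf S G)
    (ha : Typed S G a cTy) (hb : Typed S (tTerm a :: G) (b.shift 1 0) cTy) :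
    Typed S G (DTm.arr (tTerm a) (tTerm b)) .type :=
  Typed.prod (typed_tTerm h4 hG ha)
    (typed_tTerm h4 (.cons hG (typed_tTerm h4 hG ha)) hb) (Or.inl rfl)

theorem typed_app_of_tArr {f x a b : DTm} (hf : Typed S G f (tTerm (tArr a b)))
    (hx : Typed S G x (tTerm a)) (h4 : S.constType 4 = some tyTerm)
    (hrule : S.hasRule arrowRuleCtx arrowRuleL arrowRuleR) (hG : CtxWf S G)
    (ha : Typed S G a cTy) (hb : Typed S (tTerm a :: G) (b.shift 1 0) cTy) :
    Typed S G (.app f x) (tTerm b) := by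
  -- `hb` stands in for weakening: the conversion goes through the Π-type `term a → term b`,
  -- whose codomain must be typed under its binder.
  have hf' : Typed S G f (DTm.arr (tTerm a) (tTerm b)) :=
    .conv hf (typed_arr_tTerm h4 hG ha hb) (.rel _ _ (red_tTerm_tArr hrule))
  simpa only [DTm.subst0_shift_one] using Typed.app hf' hx

theorem typed_lam_tArr {M a b : DTm} (h3 : S.constType 3 = some tyArrow)
    (h4 : S.constType 4 = some tyTerm) (hrule : S.hasRule arrowRuleCtx arrowRuleL arrowRuleR)
    (hG : CtxWf S G) (ha : Typed S G a cTy) (hb : Typed S G b cTy)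
    (hM : Typed S (tTerm a :: G) M (tTerm (b.shift 1 0))) :
    Typed S G (.lam (tTerm a) M) (tTerm (tArr a b)) :=
  .conv (.abs (typed_tTerm h4 hG ha) hM) (typed_tTerm h4 hG (typed_tArr h3 hG ha hb))
    (.symm _ _ (.rel _ _ (red_tTerm_tArr hrule)))

theorem typed_tEq {a x y : DTm} (h1 : S.constType 1 = some cTy)
    (h3 : S.constType 3 = some tyArrow) (h4 : S.constType 4 = some tyTerm)
    (h5 : S.constType 5 = some tyEq) (hrule : S.hasRule arrowRuleCtx arrowRuleL arrowRuleR)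
    (hG : CtxWf S G) (ha : Typed S G a cTy) (ha' : Typed S (tTerm a :: G) (a.shift 1 0) cTy)
    (hx : Typed S G x (tTerm a)) (hy : Typed S G y (tTerm a)) :
    Typed S G (tEq a x y) (tTerm dBool) := by
  have hGa : CtxWf S (tTerm a :: G) := .cons hG (typed_tTerm h4 hG ha)
  have heq : Typed S G (.app (.const 5) a) (tTerm (tArr a (tArr a dBool))) :=
    Typed.app (B := tTerm (tArr (.var 0) (tArr (.var 0) dBool))) (Typed.const hG h5) ha
  have heqx := typed_app_of_tArr heq hx h4 hrule hG ha
    (typed_tArr h3 hGa ha' (Typed.const hGa h1))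
  exact typed_app_of_tArr heqx hy h4 hrule hG ha (Typed.const hGa h1)

end Encoding

/-- What a prefix of Σ must provide to type the types of `Refl`, `FunExt`, `AppThm`,
`PropExt` and `EqMp`. -/
structure DeclaresHolCore (S : Sig) : Prop where
  wf : SigWf S
  type : S.constType 0 = some .type
  bool : S.constType 1 = some cTy
  arrow : S.constType 3 = some tyArrow
  term : S.constType 4 = some tyTerm
  eq : S.constType 5 = some tyEq
  proof : S.constType 7 = some tyProof
  arrowRule : S.hasRule arrowRuleCtx arrowRuleL arrowRuleR

namespace DeclaresHolCore

variable {S : Sig} {G : List DTm} (hS : DeclaresHolCore S)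
include hS

theorem ctxWf_cons_tTerm {a : DTm} (hG : CtxWf S G) (ha : Typed S G a cTy) :
    CtxWf S (tTerm a :: G) :=
  .cons hG (typed_tTerm hS.term hG ha)

theorem typed_proof_eq {a x y : DTm} (hG : CtxWf S G) (ha : Typed S G a cTy)
    (ha' : Typed S (tTerm a :: G) (a.shift 1 0) cTy) (hx : Typed S G x (tTerm a))
    (hy : Typed S G y (tTerm a)) : Typed S G (tProof (tEq a x y)) .type :=
  typed_tProof hS.proof hG (typed_tEq hS.bool hS.arrow hS.term hS.eq hS.arrowRule hG ha ha' hx hy)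

theorem typed_app_var {f x k : ℕ} {b : DTm} (hG : CtxWf S G)
    (hf : Typed S G (.var f) (tTerm (tArr (.var k) b))) (hx : Typed S G (.var x) (tTerm (.var k)))
    (hk : G[k]? = some cTy) (hb : Typed S (tTerm (.var k) :: G) (b.shift 1 0) cTy) :
    Typed S G (.app (.var f) (.var x)) (tTerm b) :=
  typed_app_of_tArr hf hx hS.term hS.arrowRule hG (typed_var hG hk rfl) hb

theorem typed_tyRefl : Typed S [] tyRefl .type := by
  have c1 : CtxWf S [cTy] := .cons (.nil hS.wf) (.const (.nil hS.wf) hS.type)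
  have c2 : CtxWf S [tTerm (.var 0), cTy] := hS.ctxWf_cons_tTerm c1 (typed_var c1 rfl rfl)
  have c3 : CtxWf S [tTerm (.var 1), tTerm (.var 0), cTy] :=
    hS.ctxWf_cons_tTerm c2 (typed_var c2 rfl rfl)
  have hx : Typed S _ (.var 0) (tTerm (.var 1)) := typed_var c2 rfl rfl
  exact c1.typed_pi (c2.typed_pi
    (hS.typed_proof_eq c2 (typed_var c2 rfl rfl) (typed_var c3 rfl rfl) hx hx))

/-- The binders `α β : type, f g : term (arrow α β)` shared by the types of `FunExt` and
`AppThm`. -/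
theorem ctxWf_funPair :
    CtxWf S [tTerm (tArr (.var 2) (.var 1)), tTerm (tArr (.var 1) (.var 0)), cTy, cTy] := by
  have c1 : CtxWf S [cTy] := .cons (.nil hS.wf) (.const (.nil hS.wf) hS.type)
  have c2 : CtxWf S [cTy, cTy] := .cons c1 (.const c1 hS.type)
  have c3 := hS.ctxWf_cons_tTerm c2
    (typed_tArr hS.arrow c2 (typed_var c2 rfl rfl) (typed_var c2 rfl rfl) :
      Typed S _ (tArr (.var 1) (.var 0)) cTy)
  exact hS.ctxWf_cons_tTerm c3
    (typed_tArr hS.arrow c3 (typed_var c3 rfl rfl) (typed_var c3 rfl rfl))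

theorem typed_pi_funPair {X : DTm}
    (hX : Typed S [tTerm (tArr (.var 2) (.var 1)), tTerm (tArr (.var 1) (.var 0)), cTy, cTy]
      X .type) :
    Typed S [] (.pi cTy (.pi cTy (.pi (tTerm (tArr (.var 1) (.var 0)))
      (.pi (tTerm (tArr (.var 2) (.var 1))) X)))) .type :=
  have c4 := hS.ctxWf_funPair
  c4.of_cons.of_cons.of_cons.typed_pi (c4.of_cons.of_cons.typed_pi
    (c4.of_cons.typed_pi (c4.typed_pi hX)))

theorem typed_tyFunExt : Typed S [] tyFunExt .type := by
  have c4 := hS.ctxWf_funPair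
  have c5 := hS.ctxWf_cons_tTerm c4 (typed_var c4 rfl rfl : Typed S _ (.var 3) cTy)
  have c6 := hS.ctxWf_cons_tTerm c5 (typed_var c5 rfl rfl : Typed S _ (.var 3) cTy)
  have c6' := hS.ctxWf_cons_tTerm c5 (typed_var c5 rfl rfl : Typed S _ (.var 4) cTy)
  have hfx : Typed S _ (.app (.var 2) (.var 0)) (tTerm (.var 3)) :=
    hS.typed_app_var c5 (typed_var c5 rfl rfl) (typed_var c5 rfl rfl) rfl (typed_var c6' rfl rfl)
  have hgx : Typed S _ (.app (.var 1) (.var 0)) (tTerm (.var 3)) :=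
    hS.typed_app_var c5 (typed_var c5 rfl rfl) (typed_var c5 rfl rfl) rfl (typed_var c6' rfl rfl)
  have hQ := c5.typed_pi
    (hS.typed_proof_eq c5 (typed_var c5 rfl rfl) (typed_var c6 rfl rfl) hfx hgx)
  have c5Q := CtxWf.cons c4 hQ
  have hfg : Typed S _ (tArr (.var 4) (.var 3)) cTy :=
    typed_tArr hS.arrow c5Q (typed_var c5Q rfl rfl) (typed_var c5Q rfl rfl)
  have c6Q := hS.ctxWf_cons_tTerm c5Q hfg
  exact hS.typed_pi_funPair (c5Q.typed_pi (hS.typed_proof_eq c5Q hfg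
    (typed_tArr hS.arrow c6Q (typed_var c6Q rfl rfl) (typed_var c6Q rfl rfl))
    (typed_var c5Q rfl rfl) (typed_var c5Q rfl rfl)))

theorem typed_tyAppThm : Typed S [] tyAppThm .type := by
  have c4 := hS.ctxWf_funPair
  have c5 := hS.ctxWf_cons_tTerm c4 (typed_var c4 rfl rfl : Typed S _ (.var 3) cTy)
  have c6 := hS.ctxWf_cons_tTerm c5 (typed_var c5 rfl rfl : Typed S _ (.var 4) cTy)
  have hαβ : Typed S _ (tArr (.var 5) (.var 4)) cTy :=
    typed_tArr hS.arrow c6 (typed_var c6 rfl rfl) (typed_var c6 rfl rfl)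
  have c6' := hS.ctxWf_cons_tTerm c6 hαβ
  have hfg : Typed S _ (tProof (tEq (tArr (.var 5) (.var 4)) (.var 3) (.var 2))) .type :=
    hS.typed_proof_eq c6 hαβ
      (typed_tArr hS.arrow c6' (typed_var c6' rfl rfl) (typed_var c6' rfl rfl))
      (typed_var c6 rfl rfl) (typed_var c6 rfl rfl)
  have c7 := CtxWf.cons c6 hfg
  have c7' := hS.ctxWf_cons_tTerm c7 (typed_var c7 rfl rfl : Typed S _ (.var 6) cTy)
  have hxy : Typed S _ (tProof (tEq (.var 6) (.var 2) (.var 1))) .type :=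
    hS.typed_proof_eq c7 (typed_var c7 rfl rfl) (typed_var c7' rfl rfl)
      (typed_var c7 rfl rfl) (typed_var c7 rfl rfl)
  have c8 := CtxWf.cons c7 hxy
  have c8α := hS.ctxWf_cons_tTerm c8 (typed_var c8 rfl rfl : Typed S _ (.var 7) cTy)
  have c8β := hS.ctxWf_cons_tTerm c8 (typed_var c8 rfl rfl : Typed S _ (.var 6) cTy)
  have hfx : Typed S _ (.app (.var 5) (.var 3)) (tTerm (.var 6)) :=
    hS.typed_app_var c8 (typed_var c8 rfl rfl) (typed_var c8 rfl rfl) rfl (typed_var c8α rfl rfl)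
  have hgy : Typed S _ (.app (.var 4) (.var 2)) (tTerm (.var 6)) :=
    hS.typed_app_var c8 (typed_var c8 rfl rfl) (typed_var c8 rfl rfl) rfl (typed_var c8α rfl rfl)
  exact hS.typed_pi_funPair (c5.typed_pi (c6.typed_pi (c7.typed_pi (c8.typed_pi
    (hS.typed_proof_eq c8 (typed_var c8 rfl rfl) (typed_var c8β rfl rfl) hfx hgy)))))

theorem ctxWf_boolPair : CtxWf S [tTerm dBool, tTerm dBool] := by
  have c1 := hS.ctxWf_cons_tTerm (.nil hS.wf) (.const (.nil hS.wf) hS.bool)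
  exact hS.ctxWf_cons_tTerm c1 (.const c1 hS.bool)

theorem typed_proof_var {k : ℕ} (hG : CtxWf S G) (hk : G[k]? = some (tTerm dBool)) :
    Typed S G (tProof (.var k)) .type :=
  typed_tProof hS.proof hG (typed_var hG hk rfl)

theorem typed_proof_eq_bool_var {i j : ℕ} (hG : CtxWf S G) (hi : G[i]? = some (tTerm dBool))
    (hj : G[j]? = some (tTerm dBool)) : Typed S G (tProof (tEq dBool (.var i) (.var j))) .type :=
  hS.typed_proof_eq hG (.const hG hS.bool)
    (.const (hS.ctxWf_cons_tTerm hG (.const hG hS.bool)) hS.bool)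
    (typed_var hG hi rfl) (typed_var hG hj rfl)

theorem typed_tyPropExt : Typed S [] tyPropExt .type := by
  have c2 := hS.ctxWf_boolPair
  have c2' := CtxWf.cons c2 (hS.typed_proof_var c2 (k := 0) rfl)
  have c3 := CtxWf.cons c2 (c2'.typed_pi (hS.typed_proof_var c2' (k := 2) rfl))
  have c3' := CtxWf.cons c3 (hS.typed_proof_var c3 (k := 1) rfl)
  have c4 := CtxWf.cons c3 (c3'.typed_pi (hS.typed_proof_var c3' (k := 3) rfl))
  exact c2.of_cons.typed_pi (c2.typed_pi (c3.typed_pi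
    (c4.typed_pi (hS.typed_proof_eq_bool_var c4 (i := 3) (j := 2) rfl rfl))))

theorem typed_tyEqMp : Typed S [] tyEqMp .type := by
  have c2 := hS.ctxWf_boolPair
  have c3 := CtxWf.cons c2 (hS.typed_proof_eq_bool_var c2 (i := 1) (j := 0) rfl rfl)
  have c3' := CtxWf.cons c3 (hS.typed_proof_var c3 (k := 2) rfl)
  exact c2.of_cons.typed_pi (c2.typed_pi (c3.typed_pi
    (c3'.typed_pi (hS.typed_proof_var c3' (k := 2) rfl))))

end DeclaresHolCore

theorem sigWf_baseSig : SigWf baseSig := by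
  have w1 : SigWf (Sig.empty.pushConst 0 .type) :=
    .pushConst .empty (.type (.nil .empty)) (.inr rfl) rfl
  have w2 := SigWf.pushConst (c := 1) w1 (.const (c := 0) (.nil w1) rfl) (.inl rfl) rfl
  have w3 := SigWf.pushConst (c := 2) w2 (.const (c := 0) (.nil w2) rfl) (.inl rfl) rfl
  have c1 : CtxWf _ [cTy] := .cons (.nil w3) (.const (.nil w3) rfl)
  have c2 : CtxWf _ [cTy, cTy] := .cons c1 (.const c1 rfl)
  have w4 := SigWf.pushConst (c := 3) (A := tyArrow) w3
    (c1.typed_pi (c2.typed_pi (.const c2 rfl))) (.inl rfl) rfl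
  have t0 : Typed _ [] cTy .type := .const (.nil w4) rfl
  exact .pushConst w4 (.prod t0 (.type (.cons (.nil w4) t0)) (.inr rfl)) (.inr rfl) rfl

/-- The prefix of Σ preceding `Refl`. -/
def holTypesSig : Sig :=
  (((baseSig.pushConst 5 tyEq).pushConst 6 tySelect).pushRule arrowRuleCtx arrowRuleL
    arrowRuleR).pushConst 7 tyProof

theorem sigWf_holTypesSig : SigWf holTypesSig := by
  have w5 := sigWf_baseSig
  have c1 : CtxWf baseSig [cTy] := .cons (.nil w5) (.const (.nil w5) rfl)
  have hbool : Typed baseSig [cTy] dBool cTy := .const c1 rfl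
  have w6 := SigWf.pushConst (c := 5) (A := tyEq) w5 (c1.typed_pi (typed_tTerm rfl c1
    (typed_tArr rfl c1 (typed_var c1 rfl rfl) (typed_tArr rfl c1 (typed_var c1 rfl rfl) hbool))))
    (.inl rfl) rfl
  have c1' : CtxWf _ [cTy] := .cons (.nil w6) (.const (.nil w6) rfl)
  have w7 := SigWf.pushConst (c := 6) (A := tySelect) w6 (c1'.typed_pi (typed_tTerm rfl c1'
    (typed_tArr rfl c1' (typed_tArr rfl c1' (typed_var c1' rfl rfl) (.const c1' rfl))
      (typed_var c1' rfl rfl)))) (.inl rfl) rfl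
  have c1'' : CtxWf _ [cTy] := .cons (.nil w7) (.const (.nil w7) rfl)
  have c2 : CtxWf _ arrowRuleCtx := .cons c1'' (.const c1'' rfl)
  have c3 := CtxWf.cons c2
    (typed_tTerm rfl c2 (typed_var c2 rfl rfl) : Typed _ _ (tTerm (.var 1)) _)
  have w8 := SigWf.pushRule w7
    (typed_tTerm rfl c2 (typed_tArr rfl c2 (typed_var c2 rfl rfl) (typed_var c2 rfl rfl)) :
      Typed _ _ arrowRuleL _)
    (c3.typed_pi (typed_tTerm rfl c3 (typed_var c3 rfl rfl) : Typed _ _ (tTerm (.var 1)) _))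
  have tbool : Typed _ [] (tTerm dBool) .type := typed_tTerm rfl (.nil w8) (.const (.nil w8) rfl)
  exact .pushConst w8 (.prod tbool (.type (.cons (.nil w8) tbool)) (.inr rfl)) (.inr rfl) rfl

theorem sigWf_holSig : SigWf holSig := by
  have w9 := sigWf_holTypesSig
  have w10 := SigWf.pushConst (c := 8) w9
    (DeclaresHolCore.typed_tyRefl
      ⟨w9, rfl, rfl, rfl, rfl, rfl, rfl, .inl ⟨rfl, rfl, rfl⟩⟩)
    (.inl rfl) rfl
  have w11 := SigWf.pushConst (c := 9) w10
    (DeclaresHolCore.typed_tyFunExt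
      ⟨w10, rfl, rfl, rfl, rfl, rfl, rfl, .inl ⟨rfl, rfl, rfl⟩⟩)
    (.inl rfl) rfl
  have w12 := SigWf.pushConst (c := 10) w11
    (DeclaresHolCore.typed_tyAppThm
      ⟨w11, rfl, rfl, rfl, rfl, rfl, rfl, .inl ⟨rfl, rfl, rfl⟩⟩)
    (.inl rfl) rfl
  have w13 := SigWf.pushConst (c := 11) w12
    (DeclaresHolCore.typed_tyPropExt
      ⟨w12, rfl, rfl, rfl, rfl, rfl, rfl, .inl ⟨rfl, rfl, rfl⟩⟩)
    (.inl rfl) rfl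
  exact .pushConst w13
    (DeclaresHolCore.typed_tyEqMp
      ⟨w13, rfl, rfl, rfl, rfl, rfl, rfl, .inl ⟨rfl, rfl, rfl⟩⟩)
    (.inl rfl) rfl

theorem transTy_shift (d : ℕ) (ρ : ℕ → ℕ) :
    ∀ A : HTy, (transTy ρ A).shift d 0 = transTy (fun j => ρ j + d) A
  | .tvar _ => by simp [transTy, DTm.shift]
  | .bool | .ind => rfl
  | .arr A B => by simp only [transTy, tArr, DTm.shift, transTy_shift d ρ A, transTy_shift d ρ B]

theorem transTy_subst_var (r ρ : ℕ → ℕ) :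
    ∀ A : HTy, (transTy ρ A).subst (fun n => .var (r n)) = transTy (fun j => r (ρ j)) A
  | .tvar _ | .bool | .ind => rfl
  | .arr A B => by
    simp only [transTy, tArr, DTm.subst, transTy_subst_var r ρ A, transTy_subst_var r ρ B]

theorem liftSub_var_comp (r : ℕ → ℕ) :
    DTm.liftSub (fun n => .var (r n)) = fun n => .var (liftVar r n) := by
  funext n; cases n <;> rfl

theorem transTm_subst_var : ∀ (M : HTm) (r ρT ρt : ℕ → ℕ),
    (transTm ρT ρt M).subst (fun n => .var (r n))
      = transTm (fun j => r (ρT j)) (fun i => r (ρt i)) M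
  | .var _, _, _, _ => rfl
  | .app M N, r, ρT, ρt => by
    simp only [transTm, DTm.subst, transTm_subst_var M, transTm_subst_var N]
  | .eq _, r, ρT, _ | .select _, r, ρT, _ => by
    simp only [transTm, DTm.subst, transTy_subst_var]
  | .lam A M, r, ρT, ρt => by
    have hlift : (fun i => liftVar r (liftVar ρt i)) = liftVar (fun i => r (ρt i)) := by
      funext i; cases i <;> rfl
    simp only [transTm, tTerm, DTm.subst, liftSub_var_comp, transTm_subst_var M,
      transTy_subst_var, hlift]
    rfl

theorem transTm_shift (d : ℕ) : ∀ (M : HTm) (c : ℕ) (ρT ρt : ℕ → ℕ),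
    transTm ρT ρt (M.shift d c) = transTm ρT (fun i => if i < c then ρt i else ρt (i + d)) M
  | .var i, c, _, _ => by by_cases h : i < c <;> simp [HTm.shift, transTm, h]
  | .app M N, c, ρT, ρt => by
    simp only [HTm.shift, transTm, transTm_shift d M, transTm_shift d N]
  | .eq _, _, _, _ | .select _, _, _, _ => rfl
  | .lam A M, c, ρT, ρt => by
    have hlift : (fun i => if i < c + 1 then liftVar ρt i else liftVar ρt (i + d))
        = liftVar (fun i => if i < c then ρt i else ρt (i + d)) := by
      funext i
      cases i with
      | zero => rfl
      | succ i =>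
        simp only [liftVar, Nat.add_lt_add_iff_right, Nat.add_right_comm i 1 d]
        split_ifs <;> rfl
    simp only [HTm.shift, transTm, transTm_shift d M, hlift]

theorem red_transTm_beta_var0 (S : Sig) (ρT ρt : ℕ → ℕ) (A : HTy) (M : HTm) :
    Red S (transTm ρT ρt (.app (.lam A (M.shift 1 1)) (.var 0))) (transTm ρT ρt M) := by
  have hsubst0 : ∀ X : DTm, X.subst0 (.var (ρt 0))
      = X.subst (fun n => .var (Nat.casesOn n (ρt 0) id)) := by
    intro X; unfold DTm.subst0; congr 1; funext n; cases n <;> rfl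
  have hreduct : (transTm (fun j => ρT j + 1) (liftVar ρt) (M.shift 1 1)).subst0 (.var (ρt 0))
      = transTm ρT ρt M := by
    rw [hsubst0, transTm_shift, transTm_subst_var]
    congr 1; funext i; cases i <;> rfl
  exact hreduct ▸ Red.beta _ _ _

theorem HTyped.weaken {A B : HTy} {M : HTm} {D : List HTy} (h : HTyped D M B) :
    ∀ D₁ D₂, D = D₁ ++ D₂ → HTyped (D₁ ++ A :: D₂) (M.shift 1 D₁.length) B := by
  induction h with
  | @var D i T hi =>
    rintro D₁ D₂ rfl
    by_cases h : i < D₁.length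
    · simp only [HTm.shift, if_pos h]
      exact .var (by simpa [List.getElem?_append_left h] using hi)
    · simp only [HTm.shift, if_neg h]
      rw [List.getElem?_append_right (by omega)] at hi
      refine .var ?_
      rw [List.getElem?_append_right (by omega), Nat.sub_add_comm (not_lt.mp h)]
      exact hi
  | lam _ ih => rintro D₁ D₂ rfl; exact .lam (ih (_ :: D₁) D₂ rfl)
  | app _ _ ihM ihN => intro D₁ D₂ hD; exact .app (ihM D₁ D₂ hD) (ihN D₁ D₂ hD)
  | eq => intros; exact .eq
  | select => intros; exact .select

theorem HTm.tvLt_shift {n d : ℕ} : ∀ (M : HTm) (c : ℕ), M.tvLt n → (M.shift d c).tvLt n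
  | .var i, c, _ => by by_cases h : i < c <;> simp [HTm.shift, h, HTm.tvLt]
  | .lam _ M, c, h => ⟨h.1, M.tvLt_shift (c + 1) h.2⟩
  | .app M N, c, h => ⟨M.tvLt_shift c h.1, N.tvLt_shift c h.2⟩
  | .eq _, _, h | .select _, _, h => h

theorem HTyped.tvLt {n : ℕ} {D : List HTy} {M : HTm} {B : HTy} (h : HTyped D M B)
    (hM : M.tvLt n) (hD : ∀ T ∈ D, T.tvLt n) : B.tvLt n := by
  induction h with
  | var hi => exact hD _ (List.mem_of_getElem? hi)
  | lam _ ih => exact ⟨hM.1, ih hM.2 (List.forall_mem_cons.mpr ⟨hM.1, hD⟩)⟩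
  | app _ _ ihM _ => exact (ihM hM.1 hD).2
  | eq => exact ⟨hM, hM, trivial⟩
  | select => exact ⟨⟨hM, trivial⟩, hM⟩

theorem holSig_hasRule_arrow : holSig.hasRule arrowRuleCtx arrowRuleL arrowRuleR :=
  .inl ⟨rfl, rfl, rfl⟩

theorem typed_transTy {G : List DTm} {ρ : ℕ → ℕ} {n : ℕ} (hG : CtxWf holSig G)
    (hρ : ∀ j < n, G[ρ j]? = some cTy) :
    ∀ {A : HTy}, A.tvLt n → Typed holSig G (transTy ρ A) cTy
  | .tvar j, hj => Typed.var hG (hρ j hj)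
  | .bool, _ | .ind, _ => .const hG rfl
  | .arr _ _, h => typed_tArr rfl hG (typed_transTy hG hρ h.1) (typed_transTy hG hρ h.2)

theorem typed_transTy_shift {X : DTm} {G : List DTm} {ρ : ℕ → ℕ} {n : ℕ} {A : HTy}
    (hG : CtxWf holSig (X :: G)) (hρ : ∀ j < n, G[ρ j]? = some cTy) (hA : A.tvLt n) :
    Typed holSig (X :: G) ((transTy ρ A).shift 1 0) cTy := by
  rw [transTy_shift]
  exact typed_transTy hG (fun j hj => by simpa using hρ j hj) hA

def holCtx (D : List HTy) (n : ℕ) : List DTm := dTermCtx D ++ List.replicate n cTy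

theorem dTermCtx_length : ∀ D : List HTy, (dTermCtx D).length = D.length
  | [] => rfl
  | _ :: D => congrArg (· + 1) (dTermCtx_length D)

theorem holCtx_getElem?_tyVar {D : List HTy} {n j : ℕ} (hj : j < n) :
    (holCtx D n)[D.length + j]? = some cTy := by
  simp [holCtx, dTermCtx_length, hj]

theorem holCtx_getElem?_termVar {n : ℕ} :
    ∀ {D : List HTy} {i : ℕ} {A : HTy}, D[i]? = some A →
    (holCtx D n)[i]? = some (tTerm (transTy (fun j => D.length - (i + 1) + j) A))
  | T :: D, 0, A, h => by cases h; simp [holCtx, dTermCtx]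
  | T :: D, i + 1, A, h => by
    have := holCtx_getElem?_termVar (n := n) (D := D) (i := i) (by simpa using h)
    simpa [holCtx, dTermCtx, Nat.add_sub_add_right] using this

theorem ctxWf_replicate_cTy : ∀ n, CtxWf holSig (List.replicate n cTy)
  | 0 => .nil sigWf_holSig
  | n + 1 => .cons (ctxWf_replicate_cTy n) (.const (ctxWf_replicate_cTy n) rfl)

theorem ctxWf_holCtx {n : ℕ} :
    ∀ {D : List HTy}, (∀ T ∈ D, T.tvLt n) → CtxWf holSig (holCtx D n)
  | [], _ => ctxWf_replicate_cTy n
  | T :: D, hD => by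
    have hG := ctxWf_holCtx (fun T' hT' => hD T' (List.mem_cons_of_mem T hT'))
    exact .cons hG (typed_tTerm rfl hG
      (typed_transTy hG (fun _ => holCtx_getElem?_tyVar) (hD T List.mem_cons_self)))

theorem typed_transTm {n : ℕ} {D : List HTy} {M : HTm} {B : HTy} (h : HTyped D M B)
    (hM : M.tvLt n) (hD : ∀ T ∈ D, T.tvLt n) :
    Typed holSig (holCtx D n) (transTm (fun j => D.length + j) (fun i => i) M)
      (tTerm (transTy (fun j => D.length + j) B)) := by
  have hG := ctxWf_holCtx hD
  have hρ : ∀ j < n, (holCtx D n)[D.length + j]? = some cTy := fun _ => holCtx_getElem?_tyVar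
  induction h with
  | @var D i T hi =>
    refine typed_var hG (holCtx_getElem?_termVar hi) ?_
    have hlt := (List.getElem?_eq_some_iff.mp hi).1
    show tTerm ((transTy (fun j => D.length - (i + 1) + j) T).shift (i + 1) 0) = _
    rw [transTy_shift]
    congr 2; funext j; omega
  | @lam D A B M hM' ih =>
    have hAD : ∀ T ∈ A :: D, T.tvLt n := List.forall_mem_cons.mpr ⟨hM.1, hD⟩
    have ihM := ih hM.2 hAD (ctxWf_holCtx hAD) (fun _ => holCtx_getElem?_tyVar)
    have hshift : (fun j => D.length + j + 1) = fun j => (A :: D).length + j := by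
      funext j; simp only [List.length_cons]; omega
    have hlift : liftVar (fun i => i) = fun i => i := by funext i; cases i <;> rfl
    have ihM' : Typed holSig (holCtx (A :: D) n)
        (transTm (fun j => D.length + j + 1) (liftVar fun i => i) M)
        (tTerm ((transTy (fun j => D.length + j) B).shift 1 0)) := by
      rwa [transTy_shift, hshift, hlift]
    exact typed_lam_tArr rfl rfl holSig_hasRule_arrow hG (typed_transTy hG hρ hM.1)
      (typed_transTy hG hρ (hM'.tvLt hM.2 hAD)) ihM'
  | @app D A B M N hM' _ ihM ihN =>
    have hAB := hM'.tvLt hM.1 hD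
    have ha := typed_transTy hG hρ hAB.1
    exact typed_app_of_tArr (ihM hM.1 hD hG hρ) (ihN hM.2 hD hG hρ) rfl holSig_hasRule_arrow
      hG ha (typed_transTy_shift (.cons hG (typed_tTerm rfl hG ha)) hρ hAB.2)
  | eq =>
    exact Typed.app (B := tTerm (tArr (.var 0) (tArr (.var 0) dBool))) (.const hG rfl)
      (typed_transTy hG hρ hM)
  | select =>
    exact Typed.app (B := tTerm (tArr (tArr (.var 0) dBool) (.var 0))) (.const hG rfl)
      (typed_transTy hG hρ hM)

theorem typed_refl_app {G : List DTm} {a m : DTm} (hG : CtxWf holSig G)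
    (ha : Typed holSig G a cTy) (hm : Typed holSig G m (tTerm a)) :
    Typed holSig G (.app (.app dRefl a) m) (tProof (tEq a m m)) := by
  have hRefl : Typed holSig G (.app dRefl a)
      (.pi (tTerm a) (tProof (tEq (a.shift 1 0) (.var 0) (.var 0)))) :=
    Typed.app (B := .pi (tTerm (.var 0)) (tProof (tEq (.var 1) (.var 0) (.var 0))))
      (.const hG rfl) ha
  have htype : (tProof (tEq (a.shift 1 0) (.var 0) (.var 0))).subst0 m = tProof (tEq a m m) := by
    show tProof (tEq ((a.shift 1 0).subst0 m) m m) = _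
    rw [DTm.subst0_shift_one]
  exact htype ▸ Typed.app hRefl hm

/-- The `Beta` rule of HOL is validated by reflexivity in the translation: for
a HOL term `M` of type `B` whose term variable `x = var 0` has type `A`, the
Dedukti term `Refl |B| |M|` is well-typed in Σ, in the context declaring the
translated free type and term variables of `(λx:A. M) x`, with the type
`‖(λx:A. M) x = M‖ = proof (eq |B| |(λx:A. M) x| |M|)`. -/
theorem beta_rule_by_refl (n : ℕ) (Δ : List HTy) (A B : HTy) (M : HTm)
    (hM : HTyped (A :: Δ) M B) (hA : A.tvLt n) (hB : B.tvLt n) (hMtv : M.tvLt n)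
    (hΔ : ∀ T ∈ Δ, T.tvLt n) :
    Typed holSig (dTermCtx (A :: Δ) ++ List.replicate n cTy)
      (.app (.app dRefl (transTy (fun j => Δ.length + 1 + j) B))
        (transTm (fun j => Δ.length + 1 + j) (fun i => i) M))
      (tProof (tEq (transTy (fun j => Δ.length + 1 + j) B)
        (transTm (fun j => Δ.length + 1 + j) (fun i => i)
          (.app (.lam A (M.shift 1 1)) (.var 0)))
        (transTm (fun j => Δ.length + 1 + j) (fun i => i) M))) := by
  have hD : ∀ T ∈ A :: Δ, T.tvLt n := List.forall_mem_cons.mpr ⟨hA, hΔ⟩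
  have hG := ctxWf_holCtx hD
  have hρ : ∀ j < n, (holCtx (A :: Δ) n)[(A :: Δ).length + j]? = some cTy :=
    fun _ => holCtx_getElem?_tyVar
  have hB' := typed_transTy hG hρ hB
  have hM' := typed_transTm hM hMtv hD
  have hRedex : HTyped (A :: Δ) (.app (.lam A (M.shift 1 1)) (.var 0)) B :=
    .app (.lam (hM.weaken [A] Δ rfl)) (.var rfl)
  have hRedex' := typed_transTm hRedex ⟨⟨hA, M.tvLt_shift 1 hMtv⟩, trivial⟩ hD
  have hEq := typed_tEq rfl rfl rfl rfl holSig_hasRule_arrow hG hB'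
    (typed_transTy_shift (.cons hG (typed_tTerm rfl hG hB')) hρ hB) hRedex' hM'
  exact .conv (typed_refl_app hG hB' hM') (typed_tProof rfl hG hEq)
    (.symm _ _ (.rel _ _ (.appR _ (.appL _ (.appR _ (red_transTm_beta_var0 _ _ _ A M))))))

end HolDk
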